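/- arXiv:1907.04912 — 7 statements merged into one kernel-verified Lean document; each statement's English description precedes it below -/
import Mathlib

section
/- Let A be a unital C*-algebra, b ∈ A, and define the 2×2 matrix λ with entries λ₁₁ = (1 + b*b)^{1/2}, λ₁₂ = b*, λ₂₁ = b, λ₂₂ = (1 + bb*)^{1/2}. Then λ ρ λ = ρ, where ρ = diag(1, -1), and consequently λ⁻¹ = ρ λ ρ. -/
/-!
Multiplying out, `λ ρ λ = ρ` amounts to `s² - b*b = 1`, `t² - bb* = 1` and the intertwining
relations `b s = t b`, `s b* = b* t`. The second is the adjoint of the first, and the first holds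
because `b (1 + b*b) = (1 + bb*) b`: this relation passes to polynomials in the two elements, hence
by Weierstrass approximation to every continuous function of them, in particular to the square
root, which by uniqueness of positive square roots gives `s` and `t`. Finally `ρ² = 1` turns
`λ ρ λ = ρ` into `λ (ρ λ ρ) = 1 = (ρ λ ρ) λ`.
-/

open Polynomial Filter Topology

lemma SemiconjBy.aeval {R A : Type*} [CommSemiring R] [Semiring A] [Algebra R A] {a x y : A}
    (h : SemiconjBy a x y) (q : R[X]) : SemiconjBy a (aeval x q) (aeval y q) := by
  induction q using Polynomial.induction_on' with
  | add p q hp hq => simpa only [map_add] using hp.add_right hq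
  | monomial n r =>
    simpa only [aeval_monomial, ← Algebra.smul_def] using (h.pow_right n).smul_right r

lemma exists_seq_polynomial_tendstoUniformlyOn {s : Set ℝ} (hs : IsCompact s) {f : ℝ → ℝ}
    (hf : ContinuousOn f s) :
    ∃ q : ℕ → ℝ[X], TendstoUniformlyOn (fun n t ↦ (q n).eval t) f atTop s := by
  have : CompactSpace s := isCompact_iff_compactSpace.mp hs
  let F : C(s, ℝ) := ⟨s.domRestrict f, hf.domRestrict⟩
  have hF : F ∈ closure (polynomialFunctions s : Set C(s, ℝ)) := by
    rw [← Subalgebra.topologicalClosure_coe, polynomialFunctions.topologicalClosure]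
    trivial
  obtain ⟨G, hG, hlim⟩ := mem_closure_iff_seq_limit.mp hF
  choose q _ hq using hG
  rw [ContinuousMap.tendsto_iff_tendstoUniformly] at hlim
  simp_rw [← hq] at hlim
  exact ⟨q, tendstoUniformlyOn_iff_tendstoUniformly_comp_coe.mpr hlim⟩

theorem SemiconjBy.cfc_real {A : Type*} [Ring A] [StarRing A] [Algebra ℝ A] [TopologicalSpace A]
    [ContinuousFunctionalCalculus ℝ A IsSelfAdjoint] [IsTopologicalRing A] [T2Space A]
    {a x y : A} (h : SemiconjBy a x y) (hx : IsSelfAdjoint x) (hy : IsSelfAdjoint y)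
    (f : ℝ → ℝ) (hf : ContinuousOn f (spectrum ℝ x ∪ spectrum ℝ y)) :
    SemiconjBy a (cfc f x) (cfc f y) := by
  obtain ⟨q, hq⟩ := exists_seq_polynomial_tendstoUniformlyOn
    ((ContinuousFunctionalCalculus.isCompact_spectrum x).union
      (ContinuousFunctionalCalculus.isCompact_spectrum y)) hf
  have hlim {z : A} (hz : IsSelfAdjoint z) (hsub : spectrum ℝ z ⊆ spectrum ℝ x ∪ spectrum ℝ y) :
      Tendsto (fun n ↦ Polynomial.aeval z (q n)) atTop (𝓝 (cfc f z)) := by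
    simp_rw [← cfc_polynomial _ z]
    exact tendsto_cfc_fun (hq.mono hsub) (.of_forall fun n ↦ (q n).continuousOn)
  exact tendsto_nhds_unique (((hlim hx Set.subset_union_left).const_mul a).congr
    fun n ↦ (h.aeval (q n)).eq) ((hlim hy Set.subset_union_right).mul_const a)

lemma semiconjBy_sqrt_one_add_star_mul_self {A : Type*} [CStarAlgebra A] [PartialOrder A]
    [StarOrderedRing A] (b : A) :
    SemiconjBy b (CFC.sqrt (1 + star b * b)) (CFC.sqrt (1 + b * star b)) := by
  have hbb : SemiconjBy b (1 + star b * b) (1 + b * star b) := by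
    simp only [SemiconjBy, mul_add, add_mul, mul_one, one_mul, mul_assoc]
  have hx : 0 ≤ 1 + star b * b := add_nonneg zero_le_one (star_mul_self_nonneg b)
  have hy : 0 ≤ 1 + b * star b := add_nonneg zero_le_one (mul_star_self_nonneg b)
  rw [CFC.sqrt_eq_real_sqrt _ hx, CFC.sqrt_eq_real_sqrt _ hy, cfcₙ_eq_cfc, cfcₙ_eq_cfc]
  exact hbb.cfc_real hx.isSelfAdjoint hy.isSelfAdjoint _ Real.continuous_sqrt.continuousOn

theorem Matrix.fin_two_mul_diag_one_neg_one_mul {R : Type*} [Ring R] {s t b c : R}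
    (hbs : b * s = t * b) (hsc : s * c = c * t) (hs : s * s = 1 + c * b)
    (ht : t * t = 1 + b * c) :
    !![s, c; b, t] * !![1, 0; 0, -1] * !![s, c; b, t] = !![1, 0; 0, -1] := by
  simp [hbs, hsc, hs, ht]

/-- Let `b` be an element of a unital C*-algebra `A`, `s = (1 + b*b)^{1/2}`,
`t = (1 + bb*)^{1/2}`, and `λ = [[s, b*], [b, t]] ∈ M₂(A)`. Then `λ ρ λ = ρ` where
`ρ = diag(1,-1)`, and consequently `λ⁻¹ = ρ λ ρ`. -/
theorem stmt_3 {A : Type*} [CStarAlgebra A] [PartialOrder A] [StarOrderedRing A]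
    (b s t : A)
    (hs_pos : 0 ≤ s) (hs_sq : s * s = 1 + star b * b)
    (ht_pos : 0 ≤ t) (ht_sq : t * t = 1 + b * star b)
    (l ρ : Matrix (Fin 2) (Fin 2) A)
    (hl : l = !![s, star b; b, t])
    (hρ : ρ = !![1, 0; 0, -1]) :
    l * ρ * l = ρ ∧ l * (ρ * l * ρ) = 1 ∧ (ρ * l * ρ) * l = 1 := by
  have hbs : b * s = t * b := by
    rw [← CFC.sqrt_unique hs_sq, ← CFC.sqrt_unique ht_sq]
    exact semiconjBy_sqrt_one_add_star_mul_self b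
  have hsb : s * star b = star b * t := by
    simpa only [star_mul, hs_pos.isSelfAdjoint.star_eq, ht_pos.isSelfAdjoint.star_eq]
      using congrArg star hbs
  have hlρl : l * ρ * l = ρ := hl ▸ hρ ▸ Matrix.fin_two_mul_diag_one_neg_one_mul hbs hsb hs_sq ht_sq
  have hρρ : ρ * ρ = 1 := by simp [hρ, Matrix.one_fin_two]
  refine ⟨hlρl, ?_, ?_⟩
  · rw [← mul_assoc, ← mul_assoc, hlρl, hρρ]
  · rw [mul_assoc, mul_assoc, ← mul_assoc l ρ l, hlρl, hρρ]
end

section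
/- Let A be a unital C*-algebra and x, y ∈ A² with x₁, y₁ invertible and θ(x,x) = θ(y,y) = 1 where θ(x,y) = x₁*y₁ - x₂*y₂. Then p_x = p_y (where p_x = x x* ρ, ρ = diag(1,-1)) if and only if there exists a unitary u ∈ A with y = x u (i.e. y₁ = x₁u, y₂ = x₂u). -/
/-!
Comparing the first columns of `p_x` and `p_y` gives `x₁ x₁* = y₁ y₁*` and `x₂ x₁* = y₂ y₁*`.
The first identity says `u := x₁⁻¹ y₁` satisfies `u u* = 1`; since `u` is invertible this forces
`u* = u⁻¹`, so `u` is unitary, and the second identity then reads `x₂ = y₂ u*`, i.e. `y₂ = x₂ u`.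
Conversely `y = x u` with `u u* = 1` gives `y_i y_j* = x_i x_j*` entrywise.
-/

open Matrix

section StarMonoid

variable {R : Type*} [Monoid R] [StarMul R]

theorem mul_mul_star_mul_of_mem_unitary {u : R} (hu : u ∈ unitary R) (a b : R) :
    a * u * star (b * u) = a * star b := by
  rw [star_mul, mul_assoc, ← mul_assoc u, Unitary.mul_star_self_of_mem hu, one_mul]

theorem exists_mem_unitary_of_mul_star_eq {x₁ x₂ y₁ y₂ : R} (hx₁ : IsUnit x₁)
    (hy₁ : IsUnit y₁) (h₁ : x₁ * star x₁ = y₁ * star y₁) (h₂ : x₂ * star x₁ = y₂ * star y₁) :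
    ∃ u ∈ unitary R, y₁ = x₁ * u ∧ y₂ = x₂ * u := by
  obtain ⟨a, rfl⟩ := hx₁
  set u : R := ↑a⁻¹ * y₁ with hu_def
  have star_mul_star_inv : star (a : R) * star (↑a⁻¹ : R) = 1 := by
    rw [← star_mul, Units.inv_mul, star_one]
  have hu : u ∈ unitary R := by
    refine ((a⁻¹).isUnit.mul hy₁).mem_unitary_of_mul_star_self ?_
    calc u * star u = ↑a⁻¹ * (y₁ * star y₁) * star (↑a⁻¹ : R) := by
          simp only [hu_def, star_mul, mul_assoc]
      _ = ↑a⁻¹ * a * (star (a : R) * star (↑a⁻¹ : R)) := by rw [← h₁]; simp only [mul_assoc]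
      _ = 1 := by rw [Units.inv_mul, star_mul_star_inv, one_mul]
  have hx₂ : x₂ = y₂ * star u :=
    calc x₂ = x₂ * star (a : R) * star (↑a⁻¹ : R) := by rw [mul_assoc, star_mul_star_inv, mul_one]
      _ = y₂ * star u := by rw [h₂, hu_def, star_mul, mul_assoc]
  refine ⟨u, hu, by rw [hu_def, ← mul_assoc, Units.mul_inv, one_mul], ?_⟩
  rw [hx₂, mul_assoc, Unitary.star_mul_self_of_mem hu, mul_one]

end StarMonoid

theorem stmt_7_general {A : Type*} [CStarAlgebra A]
    (x₁ x₂ y₁ y₂ : A) (hx₁ : IsUnit x₁) (hy₁ : IsUnit y₁) :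
    (!![x₁ * star x₁, -(x₁ * star x₂); x₂ * star x₁, -(x₂ * star x₂)] :
        Matrix (Fin 2) (Fin 2) A) =
      !![y₁ * star y₁, -(y₁ * star y₂); y₂ * star y₁, -(y₂ * star y₂)] ↔
    ∃ u : A, u * star u = 1 ∧ star u * u = 1 ∧ y₁ = x₁ * u ∧ y₂ = x₂ * u := by
  constructor
  · intro h
    have h₁ : x₁ * star x₁ = y₁ * star y₁ := by simpa using congr_fun (congr_fun h 0) 0
    have h₂ : x₂ * star x₁ = y₂ * star y₁ := by simpa using congr_fun (congr_fun h 1) 0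
    obtain ⟨u, hu, hy₁u, hy₂u⟩ := exists_mem_unitary_of_mul_star_eq hx₁ hy₁ h₁ h₂
    exact ⟨u, Unitary.mul_star_self_of_mem hu, Unitary.star_mul_self_of_mem hu, hy₁u, hy₂u⟩
  · rintro ⟨u, hu₁, hu₂, rfl, rfl⟩
    simp only [mul_mul_star_mul_of_mem_unitary (Unitary.mem_iff.mpr ⟨hu₂, hu₁⟩)]

/-- Let `x, y ∈ A²` with invertible first coordinates and `θ(x,x) = θ(y,y) = 1`. Then
`p_x = p_y` (where `p_x = x x* ρ`) if and only if `y = x u` for some unitary `u ∈ A`. -/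
theorem stmt_7 {A : Type*} [CStarAlgebra A]
    (x₁ x₂ y₁ y₂ : A) (hx₁ : IsUnit x₁) (hy₁ : IsUnit y₁)
    (hx : star x₁ * x₁ - star x₂ * x₂ = 1)
    (hy : star y₁ * y₁ - star y₂ * y₂ = 1) :
    (!![x₁ * star x₁, -(x₁ * star x₂); x₂ * star x₁, -(x₂ * star x₂)] :
        Matrix (Fin 2) (Fin 2) A) =
      !![y₁ * star y₁, -(y₁ * star y₂); y₂ * star y₁, -(y₂ * star y₂)] ↔
    ∃ u : A, u * star u = 1 ∧ star u * u = 1 ∧ y₁ = x₁ * u ∧ y₂ = x₂ * u :=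
  stmt_7_general x₁ x₂ y₁ y₂ hx₁ hy₁
end

section
/- Let A be a unital C*-algebra and x, y ∈ A² both satisfying θ(x,x) = θ(y,y) = 1 with first coordinates invertible, and suppose p_x = p_y. Then u := θ(x,y) is a unitary element of A. -/
open Matrix

/-- Let `x, y ∈ A²` with invertible first coordinates, `θ(x,x) = θ(y,y) = 1`, and
`p_x = p_y`. Then `u = θ(x,y) = x₁*y₁ - x₂*y₂` is a unitary element of `A`. -/
theorem stmt_8 {A : Type*} [CStarAlgebra A]
    (x₁ x₂ y₁ y₂ : A) (hx₁ : IsUnit x₁) (hy₁ : IsUnit y₁)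
    (hx : star x₁ * x₁ - star x₂ * x₂ = 1)
    (hy : star y₁ * y₁ - star y₂ * y₂ = 1)
    (hpxy : (!![x₁ * star x₁, -(x₁ * star x₂); x₂ * star x₁, -(x₂ * star x₂)] :
        Matrix (Fin 2) (Fin 2) A) =
      !![y₁ * star y₁, -(y₁ * star y₂); y₂ * star y₁, -(y₂ * star y₂)]) :
    star (star x₁ * y₁ - star x₂ * y₂) * (star x₁ * y₁ - star x₂ * y₂) = 1 ∧
      (star x₁ * y₁ - star x₂ * y₂) * star (star x₁ * y₁ - star x₂ * y₂) = 1 := by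
  have e11 : x₁ * star x₁ = y₁ * star y₁ := by
    have := congrFun (congrFun hpxy 0) 0; simpa using this
  have e12 : x₁ * star x₂ = y₁ * star y₂ := by
    have := congrFun (congrFun hpxy 0) 1; simpa using this
  have e21 : x₂ * star x₁ = y₂ * star y₁ := by
    have := congrFun (congrFun hpxy 1) 0; simpa using this
  have e22 : x₂ * star x₂ = y₂ * star y₂ := by
    have := congrFun (congrFun hpxy 1) 1; simpa using this
  constructor
  · calc star (star x₁ * y₁ - star x₂ * y₂) * (star x₁ * y₁ - star x₂ * y₂)
        = star y₁ * (x₁ * star x₁) * y₁ - star y₁ * (x₁ * star x₂) * y₂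
          - star y₂ * (x₂ * star x₁) * y₁ + star y₂ * (x₂ * star x₂) * y₂ := by
          simp only [star_sub, StarMul.star_mul, star_star]; noncomm_ring
      _ = (star y₁ * y₁ - star y₂ * y₂) * (star y₁ * y₁ - star y₂ * y₂) := by
          rw [e11, e12, e21, e22]; noncomm_ring
      _ = 1 := by rw [hy, one_mul]
  · calc (star x₁ * y₁ - star x₂ * y₂) * star (star x₁ * y₁ - star x₂ * y₂)
        = star x₁ * (y₁ * star y₁) * x₁ - star x₁ * (y₁ * star y₂) * x₂
          - star x₂ * (y₂ * star y₁) * x₁ + star x₂ * (y₂ * star y₂) * x₂ := by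
          simp only [star_sub, StarMul.star_mul, star_star]; noncomm_ring
      _ = (star x₁ * x₁ - star x₂ * x₂) * (star x₁ * x₁ - star x₂ * x₂) := by
          rw [← e11, ← e12, ← e21, ← e22]; noncomm_ring
      _ = 1 := by rw [hx, one_mul]
end

section
/- Let A be a unital C*-algebra and x ∈ A² with θ(x,x) = 1 and x₁ invertible. If z ∈ A² lies in the nullspace of p_x = xx*ρ (i.e. p_x z = 0), then θ(x,z) = 0 and θ(z,z) ≤ 0. -/
open Matrix

/-!
Since `p_x z = x θ(x,z)`, invertibility of `x₁` turns `p_x z = 0` into `θ(x,z) = 0`, i.e.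
`z₁ = c* z₂` for `c = x₂ x₁⁻¹`. The normalisation `θ(x,x) = 1` gives
`c* c = 1 - (x₁⁻¹)* x₁⁻¹ ≤ 1`, so `c` is a contraction, hence so is `c*`, and therefore
`z₁* z₁ = z₂* (c c*) z₂ ≤ z₂* z₂`.
-/

lemma mulVec_eq_mul_sub_star_mul {R : Type*} [Ring R] [Star R] (x₁ x₂ z₁ z₂ : R) :
    !![x₁ * star x₁, -(x₁ * star x₂); x₂ * star x₁, -(x₂ * star x₂)] *ᵥ ![z₁, z₂] =
      ![x₁ * (star x₁ * z₁ - star x₂ * z₂), x₂ * (star x₁ * z₁ - star x₂ * z₂)] := by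
  ext i
  fin_cases i <;> simp [mulVec, dotProduct, Fin.sum_univ_two] <;> noncomm_ring

section StarOrderedRing

variable {R : Type*} [Ring R] [PartialOrder R] [StarRing R] [StarOrderedRing R]

lemma star_mul_self_mul_inv_le_one {u : Rˣ} {x₂ : R} (hx : star (u : R) * u - star x₂ * x₂ = 1) :
    star (x₂ * ↑u⁻¹) * (x₂ * ↑u⁻¹) ≤ 1 := by
  have hx₂ : star x₂ * x₂ = star (u : R) * u - 1 := by rw [← hx, sub_sub_cancel]
  have : star (x₂ * ↑u⁻¹) * (x₂ * ↑u⁻¹) = 1 - star (↑u⁻¹ : R) * ↑u⁻¹ := by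
    calc star (x₂ * ↑u⁻¹) * (x₂ * ↑u⁻¹)
        = star (↑u⁻¹ : R) * (star x₂ * x₂) * ↑u⁻¹ := by simp only [star_mul, mul_assoc]
      _ = star ((u : R) * ↑u⁻¹) * ((u : R) * ↑u⁻¹) - star (↑u⁻¹ : R) * ↑u⁻¹ := by
          rw [hx₂, star_mul]; noncomm_ring
      _ = 1 - star (↑u⁻¹ : R) * ↑u⁻¹ := by rw [u.mul_inv, star_one, one_mul]
  rw [this]
  exact sub_le_self _ (star_mul_self_nonneg _)

lemma star_mul_self_le_of_eq_star_mul {c z₁ z₂ : R} (hc : c * star c ≤ 1)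
    (hz : z₁ = star c * z₂) : star z₁ * z₁ ≤ star z₂ * z₂ := by
  subst hz
  simpa [mul_assoc] using star_left_conjugate_le_conjugate hc z₂

end StarOrderedRing

lemma CStarAlgebra.mul_star_self_le_one_iff {A : Type*} [CStarAlgebra A] [PartialOrder A]
    [StarOrderedRing A] {c : A} : c * star c ≤ 1 ↔ star c * c ≤ 1 := by
  rw [← norm_le_one_iff_of_nonneg _ (mul_star_self_nonneg c),
    ← norm_le_one_iff_of_nonneg _ (star_mul_self_nonneg c),
    CStarRing.norm_self_mul_star, CStarRing.norm_star_mul_self]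

/-- Let `x ∈ A²` with `θ(x,x) = 1` and `x₁` invertible. If `z` lies in the nullspace of
`p_x = x x* ρ` (i.e. `p_x z = 0`), then `θ(x,z) = 0` and `θ(z,z) ≤ 0`. -/
theorem stmt_9 {A : Type*} [CStarAlgebra A] [PartialOrder A] [StarOrderedRing A]
    (x₁ x₂ z₁ z₂ : A) (hx₁ : IsUnit x₁)
    (hx : star x₁ * x₁ - star x₂ * x₂ = 1)
    (hz : (!![x₁ * star x₁, -(x₁ * star x₂); x₂ * star x₁, -(x₂ * star x₂)] :
        Matrix (Fin 2) (Fin 2) A).mulVec ![z₁, z₂] = 0) :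
    star x₁ * z₁ - star x₂ * z₂ = 0 ∧ star z₁ * z₁ - star z₂ * z₂ ≤ 0 := by
  obtain ⟨u, rfl⟩ := hx₁
  have hθ : star (u : A) * z₁ - star x₂ * z₂ = 0 := by
    refine u.isUnit.mul_right_eq_zero.mp ?_
    simpa using congrFun ((mulVec_eq_mul_sub_star_mul _ _ _ _).symm.trans hz) 0
  refine ⟨hθ, sub_nonpos.mpr ?_⟩
  have hz₁ : z₁ = star (x₂ * ↑u⁻¹) * z₂ := by
    rw [star_mul, mul_assoc, ← sub_eq_zero.mp hθ, ← mul_assoc, ← star_mul, u.mul_inv, star_one,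
      one_mul]
  exact star_mul_self_le_of_eq_star_mul
    (CStarAlgebra.mul_star_self_le_one_iff.mpr (star_mul_self_mul_inv_le_one hx)) hz₁
end

section
/- Let A be a unital C*-algebra, ρ = diag(1,-1) ∈ M₂(A), and let q ∈ M₂(A) be an idempotent with ρq*ρ = q. Then ρ(2q-1) is positive if and only if there exists a positive invertible λ ∈ M₂(A) with λρ = ρλ⁻¹ and q = λ p λ⁻¹, where p = diag(1,0). -/
/-!
Write `s = 2q - 1`, so that `s² = 1`, and note that `2p - 1 = ρ`. If `x = ρ s` is positive, it
is invertible with `x⁻¹ = s ρ = ρ x ρ`; put `m = √x` and `λ = m⁻¹`. Conjugation by the self-adjoint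
unitary `ρ` preserves positivity, so `ρ m ρ` and `m⁻¹` are both positive square roots of `x⁻¹`,
hence equal. This gives `λ ρ = ρ m` and `λ ρ m = ρ m m = s`. Conversely, `λ ρ = ρ m` forces
`m = ρ λ ρ`, and then `ρ s = ρ λ ρ m = (λ ρ)⋆ (λ ρ)`.
-/

section Symmetry

variable {B : Type*} [CStarAlgebra B] {ρ s : B}

theorem exists_nonneg_conj_of_nonneg_mul [PartialOrder B] [StarOrderedRing B]
    (hρ : IsSelfAdjoint ρ) (hρ2 : ρ * ρ = 1) (hs : s * s = 1) (hρs : 0 ≤ ρ * s) :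
    ∃ l m : B, l * m = 1 ∧ m * l = 1 ∧ 0 ≤ l ∧ l * ρ = ρ * m ∧ s = l * ρ * m := by
  have hinv : ρ * s * (s * ρ) = 1 := by rw [mul_assoc, ← mul_assoc s, hs, one_mul, hρ2]
  have hinv' : s * ρ * (ρ * s) = 1 := by rw [mul_assoc, ← mul_assoc ρ, hρ2, one_mul, hs]
  obtain ⟨u, hu⟩ := (CFC.isUnit_sqrt_iff (ρ * s)).mpr ⟨⟨_, _, hinv, hinv'⟩, rfl⟩
  have hu_nonneg : (0 : B) ≤ u := hu ▸ CFC.sqrt_nonneg _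
  have hu_sq : (u : B) * u = ρ * s := hu ▸ CFC.sqrt_mul_sqrt_self _
  have hu_inv_sq : (↑u⁻¹ : B) * ↑u⁻¹ = s * ρ := calc
    (↑u⁻¹ : B) * ↑u⁻¹ = ↑u⁻¹ * ↑u⁻¹ * (u * u * (s * ρ)) := by rw [hu_sq, hinv, mul_one]
    _ = s * ρ := by simp only [mul_assoc, Units.inv_mul_cancel_left]
  have hρuρ : ρ * u * ρ = ↑u⁻¹ := by
    have hconj : 0 ≤ ρ * u * ρ := by
      simpa only [hρ.star_eq] using star_left_conjugate_nonneg hu_nonneg ρ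
    rw [← CFC.mul_self_eq_mul_self_iff _ _ hconj (CFC.inv_nonneg_of_nonneg u), hu_inv_sq]
    calc ρ * u * ρ * (ρ * u * ρ) = ρ * (u * u) * ρ := by
          simp only [mul_assoc, ← mul_assoc ρ ρ, hρ2, one_mul]
      _ = s * ρ := by rw [hu_sq, ← mul_assoc, hρ2, one_mul]
  refine ⟨↑u⁻¹, u, u.inv_mul, u.mul_inv, CFC.inv_nonneg_of_nonneg u, ?_, ?_⟩
  · rw [← hρuρ, mul_assoc, hρ2, mul_one]
  · calc s = ρ * (ρ * s) := by rw [← mul_assoc, hρ2, one_mul]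
      _ = ρ * u * ρ * ρ * u := by rw [← hu_sq]; simp only [mul_assoc, hρ2, one_mul]
      _ = ↑u⁻¹ * ρ * u := by rw [hρuρ]

theorem nonneg_mul_of_eq_nonneg_conj [PartialOrder B] [StarOrderedRing B] {l m : B}
    (hρ : IsSelfAdjoint ρ) (hρ2 : ρ * ρ = 1) (hl : 0 ≤ l) (hlρ : l * ρ = ρ * m)
    (hs : s = l * ρ * m) : 0 ≤ ρ * s := by
  have hm : m = ρ * l * ρ := by rw [mul_assoc, hlρ, ← mul_assoc, hρ2, one_mul]
  have : ρ * s = star (l * ρ) * (l * ρ) := by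
    rw [star_mul, hρ.star_eq, hl.isSelfAdjoint.star_eq, hs, hm]
    simp only [mul_assoc, ← mul_assoc ρ ρ, hρ2, one_mul]
  exact this ▸ star_mul_self_nonneg _

theorem exists_eq_star_mul_self_mul_iff (hρ : IsSelfAdjoint ρ) (hρ2 : ρ * ρ = 1)
    (hs : s * s = 1) :
    (∃ r, ρ * s = star r * r) ↔ ∃ l m : B, l * m = 1 ∧ m * l = 1 ∧ (∃ r, l = star r * r) ∧
      l * ρ = ρ * m ∧ s = l * ρ * m := by
  let _ : PartialOrder B := CStarAlgebra.spectralOrder B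
  let _ : StarOrderedRing B := CStarAlgebra.spectralOrderedRing B
  simp only [← CStarAlgebra.nonneg_iff_eq_star_mul_self]
  exact ⟨exists_nonneg_conj_of_nonneg_mul hρ hρ2 hs, fun ⟨_, _, _, _, hl, hlρ, hs⟩ ↦
    nonneg_mul_of_eq_nonneg_conj hρ hρ2 hl hlρ hs⟩

end Symmetry

theorem IsIdempotentElem.two_mul_sub_one_mul_self {R : Type*} [Ring R] {q : R}
    (hq : IsIdempotentElem q) : (2 * q - 1) * (2 * q - 1) = 1 := by
  simp only [sub_mul, mul_sub, two_mul, add_mul, mul_add, hq.eq, mul_one, one_mul]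
  abel

theorem eq_mul_mul_iff_two_mul_sub_one_eq {R : Type*} [Ring R] (h2 : IsUnit (2 : R))
    {q l p m : R} (hlm : l * m = 1) :
    q = l * p * m ↔ 2 * q - 1 = l * (2 * p - 1) * m := by
  have : l * (2 * p) * m = 2 * (l * p * m) := by noncomm_ring
  rw [mul_sub, sub_mul, mul_one, hlm, sub_left_inj, this, h2.mul_right_inj]

theorem stmt_10_general {A : Type*} [CStarAlgebra A]
    (q ρ p : Matrix (Fin 2) (Fin 2) A)
    (hρ : ρ = !![1, 0; 0, -1]) (hp : p = !![1, 0; 0, 0])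
    (hq_idem : q * q = q) :
    (∃ r : Matrix (Fin 2) (Fin 2) A, ρ * (2 * q - 1) = star r * r) ↔
      ∃ l m : Matrix (Fin 2) (Fin 2) A,
        l * m = 1 ∧ m * l = 1 ∧ (∃ r, l = star r * r) ∧
        l * ρ = ρ * m ∧ q = l * p * m := by
  have hρ_sa : IsSelfAdjoint ρ := by
    rw [hρ]; ext i j; fin_cases i <;> fin_cases j <;> simp
  have hρ2 : ρ * ρ = 1 := by simp [hρ, Matrix.one_fin_two]
  have hρp : ρ = 2 * p - 1 := by
    rw [hρ, hp]; ext i j; fin_cases i <;> fin_cases j <;> simp [two_mul]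
  have h2 : IsUnit (2 : Matrix (Fin 2) (Fin 2) A) := by
    rw [← map_ofNat (algebraMap ℂ (Matrix (Fin 2) (Fin 2) A)) 2]
    exact (isUnit_iff_ne_zero.mpr two_ne_zero).map _
  let _ : PartialOrder A := CStarAlgebra.spectralOrder A
  let _ : StarOrderedRing A := CStarAlgebra.spectralOrderedRing A
  -- `CStarMatrix` is `Matrix` carrying the C⋆-algebra structure of `M₂(A)` (built from an order
  -- on `A`, hence the spectral order above); the two agree definitionally, so `key` can be read
  -- as a statement about `Matrix`.
  have key := exists_eq_star_mul_self_mul_iff (B := CStarMatrix (Fin 2) (Fin 2) A)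
    hρ_sa hρ2 (IsIdempotentElem.two_mul_sub_one_mul_self hq_idem)
  refine key.trans (exists₂_congr fun (l m : Matrix (Fin 2) (Fin 2) A) ↦ ?_)
  refine and_congr_right fun hlm ↦ and_congr_right' (and_congr_right' (and_congr_right' ?_))
  rw [hρp]
  exact (eq_mul_mul_iff_two_mul_sub_one_eq h2 hlm).symm

/-- Let `q ∈ M₂(A)` be an idempotent with `ρ q* ρ = q`, where `ρ = diag(1,-1)`. Then
`ρ(2q - 1)` is positive (i.e. of the form `r* r`) if and only if there exists a positive
invertible `λ ∈ M₂(A)` with `λ ρ = ρ λ⁻¹` and `q = λ p λ⁻¹`, where `p = diag(1,0)`. -/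
theorem stmt_10 {A : Type*} [CStarAlgebra A]
    (q ρ p : Matrix (Fin 2) (Fin 2) A)
    (hρ : ρ = !![1, 0; 0, -1]) (hp : p = !![1, 0; 0, 0])
    (hq_idem : q * q = q) (hq_sym : ρ * star q * ρ = q) :
    (∃ r : Matrix (Fin 2) (Fin 2) A, ρ * (2 * q - 1) = star r * r) ↔
      ∃ l m : Matrix (Fin 2) (Fin 2) A,
        l * m = 1 ∧ m * l = 1 ∧ (∃ r, l = star r * r) ∧
        l * ρ = ρ * m ∧ q = l * p * m :=
  stmt_10_general q ρ p hρ hp hq_idem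
end

section
/- Let A be a unital C*-algebra and x ∈ A² with θ(x,x) = 1 and x₁ invertible. Then y = x·x₁*(x₁x₁*)^{-1/2} satisfies θ(y,y) = 1, lies in the range of p_x, and its first coordinate y₁ = x₁x₁*(x₁x₁*)^{-1/2} is positive and invertible. Moreover y is the unique element of the range of p_x with θ(y,y) = 1 and positive invertible first coordinate. -/
/-!
Writing `y = x · a`, one has `θ(y, y) = a* θ(x, x) a = a* a`, so the admissible `y` in the range
of `p_x` are exactly the `x · a` with `a` an isometry. For `a = x₁* t` this holds because `t` is
invertible with inverse `r t`, where `r = x₁ x₁*`; then `y₁ = r t = t⁻¹ ≥ 0` and `(r t)² = r`,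
i.e. `y₁ = √r`. Conversely, if `y₁ = x₁ a` is positive and invertible, then `a` is invertible,
hence unitary, so `y₁² = y₁ y₁* = x₁ a a* x₁* = r`; uniqueness of positive square roots gives
`y₁ = r t`, and cancelling `x₁` gives `a = x₁* t`.
-/

theorem star_mul_self_sub_star_mul_self_mul_right {R : Type*} [Ring R] [StarRing R]
    (x₁ x₂ a : R) :
    star (x₁ * a) * (x₁ * a) - star (x₂ * a) * (x₂ * a) =
      star a * (star x₁ * x₁ - star x₂ * x₂) * a := by
  simp only [star_mul]
  noncomm_ring

theorem mul_star_self_eq_one_of_isUnit_mul {M : Type*} [Monoid M] [StarMul M] {x a : M}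
    (hx : IsUnit x) (hxa : IsUnit (x * a)) (ha : star a * a = 1) : a * star a = 1 := by
  have hau : IsUnit a := (hx.unit.isUnit_units_mul a).mp (by rwa [hx.unit_spec])
  exact Unitary.mul_star_self_of_mem (hau.mem_unitary_of_star_mul_self ha)

section InverseSquare

variable {M : Type*} [Monoid M] {r t : M}

theorem commute_of_mul_mul_self_eq_one (h₁ : r * (t * t) = 1) (h₂ : t * t * r = 1) :
    Commute r t :=
  calc r * t = r * t * (t * t * r) := by rw [h₂, mul_one]
    _ = r * (t * t) * (t * r) := by simp only [mul_assoc]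
    _ = t * r := by rw [h₁, one_mul]

theorem mul_mul_eq_one_of_mul_mul_self_eq_one (h₁ : r * (t * t) = 1) (h₂ : t * t * r = 1) :
    t * (r * t) = 1 := by
  rw [(commute_of_mul_mul_self_eq_one h₁ h₂).eq, ← mul_assoc, h₂]

def unitOfMulMulSelfEqOne (h₁ : r * (t * t) = 1) (h₂ : t * t * r = 1) : Mˣ where
  val := t
  inv := r * t
  val_inv := mul_mul_eq_one_of_mul_mul_self_eq_one h₁ h₂
  inv_val := by rw [mul_assoc, h₁]

theorem mul_mul_mul_eq_of_mul_mul_self_eq_one (h₁ : r * (t * t) = 1) (h₂ : t * t * r = 1) :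
    r * t * (r * t) = r :=
  calc r * t * (r * t) = r * (t * (r * t)) := by simp only [mul_assoc]
    _ = r := by rw [mul_mul_eq_one_of_mul_mul_self_eq_one h₁ h₂, mul_one]

end InverseSquare

theorem CFC.sqrt_eq_mul_of_mul_mul_self_eq_one {A : Type*} [CStarAlgebra A] [PartialOrder A]
    [StarOrderedRing A] {r t : A} (ht : 0 ≤ t) (h₁ : r * (t * t) = 1) (h₂ : t * t * r = 1) :
    CFC.sqrt r = r * t :=
  CFC.sqrt_unique (mul_mul_mul_eq_of_mul_mul_self_eq_one h₁ h₂)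
    (CFC.inv_nonneg_of_nonneg (unitOfMulMulSelfEqOne h₁ h₂) ht)

/-- Let `x = (x₁, x₂) ∈ A²` with `θ(x,x) = 1` and `x₁` invertible, and let `t` be the
positive element with `t² = (x₁ x₁*)⁻¹` (i.e. `t = (x₁x₁*)^{-1/2}`). Then
`y = x · (x₁* t) = (x₁ x₁* t, x₂ x₁* t)` satisfies `θ(y,y) = 1`, lies in the range of
`p_x`, and has positive invertible first coordinate; moreover it is the unique such
element of the range of `p_x`. -/
theorem stmt_12 {A : Type*} [CStarAlgebra A] [PartialOrder A] [StarOrderedRing A]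
    (x₁ x₂ t : A) (hx₁ : IsUnit x₁)
    (hx : star x₁ * x₁ - star x₂ * x₂ = 1)
    (ht_pos : 0 ≤ t)
    (ht_sq : (x₁ * star x₁) * (t * t) = 1 ∧ (t * t) * (x₁ * star x₁) = 1) :
    (star (x₁ * star x₁ * t) * (x₁ * star x₁ * t) -
        star (x₂ * star x₁ * t) * (x₂ * star x₁ * t) = 1) ∧
    (∃ a : A, x₁ * star x₁ * t = x₁ * a ∧ x₂ * star x₁ * t = x₂ * a) ∧
    (0 ≤ x₁ * star x₁ * t ∧ IsUnit (x₁ * star x₁ * t)) ∧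
    (∀ y₁ y₂ : A, (∃ a : A, y₁ = x₁ * a ∧ y₂ = x₂ * a) →
      star y₁ * y₁ - star y₂ * y₂ = 1 → 0 ≤ y₁ → IsUnit y₁ →
      y₁ = x₁ * star x₁ * t ∧ y₂ = x₂ * star x₁ * t) := by
  set r := x₁ * star x₁
  obtain ⟨h₁, h₂⟩ := ht_sq
  set u := unitOfMulMulSelfEqOne h₁ h₂
  have hθ (a : A) : star (x₁ * a) * (x₁ * a) - star (x₂ * a) * (x₂ * a) = star a * a := by
    rw [star_mul_self_sub_star_mul_self_mul_right, hx, mul_one]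
  have hsqrt : CFC.sqrt r = r * t := CFC.sqrt_eq_mul_of_mul_mul_self_eq_one ht_pos h₁ h₂
  refine ⟨?_, ⟨star x₁ * t, mul_assoc .., mul_assoc ..⟩,
    ⟨CFC.inv_nonneg_of_nonneg u ht_pos, u⁻¹.isUnit⟩, ?_⟩
  · rw [mul_assoc x₁, mul_assoc x₂, hθ, star_mul, star_star, ht_pos.isSelfAdjoint.star_eq,
      mul_assoc, ← mul_assoc x₁]
    exact mul_mul_eq_one_of_mul_mul_self_eq_one h₁ h₂
  · rintro _ _ ⟨a, rfl, rfl⟩ hθa hpos hunit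
    rw [hθ] at hθa
    have ha : a * star a = 1 := mul_star_self_eq_one_of_isUnit_mul hx₁ hunit hθa
    have hy : x₁ * a = r * t := by
      rw [← hsqrt]
      refine (CFC.sqrt_unique ?_ hpos).symm
      calc x₁ * a * (x₁ * a) = x₁ * a * star (x₁ * a) := by rw [hpos.isSelfAdjoint.star_eq]
        _ = x₁ * (a * star a) * star x₁ := by simp only [star_mul, mul_assoc]
        _ = r := by rw [ha, mul_one]
    refine ⟨hy, ?_⟩
    rw [hx₁.mul_left_cancel (hy.trans (mul_assoc ..)), mul_assoc]
end

section
/- Let A be a unital C*-algebra and x ∈ A² with θ(x,x) = 1 and x₁ invertible, q = p_x = xx*ρ. For any X ∈ M₂(A) with ρX*ρ = X and Xq + qX = X, the vector Xx lies in the nullspace of q, and (Xx)x*ρ + x(Xx)*ρ = X. -/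
/-!
Write `q = x x* ρ`. Since `x* ρ x = 1`, `q` fixes `x`; the tangency condition reads
`q X = X - X q`, so `q (X x) = X x - X (q x) = 0`. For the second identity,
`(X x)* = x* X*` and `ρ² = 1` turn `(X x) x* ρ + x (X x)* ρ` into `X q + q (ρ X* ρ)`,
which is `X q + q X = X`.
-/

open Matrix

namespace Matrix

variable {n R : Type*} [Fintype n] [Ring R]

theorem mulVec_mulVec_eq_zero_of_mul_add_mul_eq {q X : Matrix n n R} {x : n → R}
    (hqx : q *ᵥ x = x) (hX : X * q + q * X = X) : q *ᵥ (X *ᵥ x) = 0 := by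
  rw [mulVec_mulVec, eq_sub_of_add_eq' hX, sub_mulVec, ← mulVec_mulVec, hqx, sub_self]

theorem signature_eq_diagonal :
    !![(1 : R), 0; 0, -1] = diagonal fun j : Fin 2 => if j = 0 then 1 else -1 := by
  ext i j
  fin_cases i <;> fin_cases j <;> simp

theorem signature_mul_self : !![(1 : R), 0; 0, -1] * !![1, 0; 0, -1] = 1 := by
  ext i j
  fin_cases i <;> fin_cases j <;> simp

variable [StarRing R]

theorem vecMulVec_star_mul_mulVec_self {ρ : Matrix n n R} {x : n → R}
    (hx : star x ⬝ᵥ (ρ *ᵥ x) = 1) : (vecMulVec x (star x) * ρ) *ᵥ x = x := by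
  rw [← mulVec_mulVec, vecMulVec_mulVec, hx, MulOpposite.op_one, one_smul]

theorem vecMulVec_mulVec_add_vecMulVec_star_mulVec_mul [DecidableEq n] {ρ : Matrix n n R}
    (hρ : ρ * ρ = 1) (X : Matrix n n R) (x : n → R) :
    (vecMulVec (X *ᵥ x) (star x) + vecMulVec x (star (X *ᵥ x))) * ρ =
      X * (vecMulVec x (star x) * ρ) + vecMulVec x (star x) * ρ * (ρ * star X * ρ) := by
  rw [← mul_vecMulVec, star_mulVec, ← vecMulVec_mul, ← star_eq_conjTranspose]
  simp only [add_mul, Matrix.mul_assoc]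
  rw [← Matrix.mul_assoc ρ ρ, hρ, Matrix.one_mul]

end Matrix

theorem stmt_17_general {A : Type*} [CStarAlgebra A]
    (ρ q X : Matrix (Fin 2) (Fin 2) A) (hρ : ρ = !![1, 0; 0, -1])
    (x : Fin 2 → A) (hx : star (x 0) * x 0 - star (x 1) * x 1 = 1)
    (hq : q = Matrix.of fun i j => (x i * star (x j)) * (if j = 0 then 1 else -1))
    (hX_sym : ρ * star X * ρ = X) (hX_tan : X * q + q * X = X) :
    q.mulVec (X.mulVec x) = 0 ∧
      (Matrix.of fun i j =>
          (X.mulVec x i * star (x j) + x i * star (X.mulVec x j)) *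
            (if j = 0 then 1 else -1)) = X := by
  have hρρ : ρ * ρ = 1 := hρ ▸ signature_mul_self
  rw [signature_eq_diagonal] at hρ
  have of_mul_sign (M : Matrix (Fin 2) (Fin 2) A) :
      (of fun i j => M i j * (if j = 0 then 1 else -1)) = M * ρ := by
    ext i j
    rw [hρ, mul_diagonal, of_apply]
  have hθ : star x ⬝ᵥ (ρ *ᵥ x) = 1 := by
    simpa [hρ, dotProduct, Fin.sum_univ_two, sub_eq_add_neg] using hx
  have hq' : q = vecMulVec x (star x) * ρ := hq.trans (of_mul_sign _)
  refine ⟨mulVec_mulVec_eq_zero_of_mul_add_mul_eq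
    (hq' ▸ vecMulVec_star_mul_mulVec_self hθ) hX_tan, ?_⟩
  calc _ = (vecMulVec (X *ᵥ x) (star x) + vecMulVec x (star (X *ᵥ x))) * ρ := of_mul_sign _
    _ = X * q + q * (ρ * star X * ρ) := by
      rw [hq']; exact vecMulVec_mulVec_add_vecMulVec_star_mulVec_mul hρρ X x
    _ = X := by rw [hX_sym, hX_tan]

/-- Let `x ∈ A²` with `θ(x,x) = 1` and `x₁` invertible, and `q = p_x = x x* ρ`. For any
tangent vector `X` at `q` (`ρ X* ρ = X` and `Xq + qX = X`), the lifted vector `v = Xx`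
lies in the nullspace of `q`, and `v x* ρ + x v* ρ = X`. -/
theorem stmt_17 {A : Type*} [CStarAlgebra A]
    (ρ q X : Matrix (Fin 2) (Fin 2) A) (hρ : ρ = !![1, 0; 0, -1])
    (x : Fin 2 → A) (hx : star (x 0) * x 0 - star (x 1) * x 1 = 1)
    (hx₁ : IsUnit (x 0))
    (hq : q = Matrix.of fun i j => (x i * star (x j)) * (if j = 0 then 1 else -1))
    (hX_sym : ρ * star X * ρ = X) (hX_tan : X * q + q * X = X) :
    q.mulVec (X.mulVec x) = 0 ∧
      (Matrix.of fun i j =>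
          (X.mulVec x i * star (x j) + x i * star (X.mulVec x j)) *
            (if j = 0 then 1 else -1)) = X :=
  stmt_17_general ρ q X hρ x hx hq hX_sym hX_tan
end
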